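/- arXiv:1603.08044 — 9 statements merged into one kernel-verified Lean document; each statement's English description precedes it below -/
import Mathlib

section
/- Let m, n, p, q be positive integers and let φ : M_{m×p} → M_{m×q} and ψ : M_{n×p} → M_{n×q} be F-linear maps such that φ(A·B) = A·ψ(B) for all A ∈ M_{m×n} and B ∈ M_{n×p}. Then there exists a matrix X ∈ M_{p×q} such that φ(C) = C·X for all C ∈ M_{m×p} and ψ(D) = D·X for all D ∈ M_{n×p}. -/
/-!
Multiplying the identity `φ (A * B) = A * ψ B` on the left by a matrix unit `E` gives
`E * ψ (A * B) = φ (E * A * B) = E * (A * ψ B)`, so `ψ` commutes with left multiplication by all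
square matrices. Such a map is right multiplication by the matrix `X` read off from the images of
the matrix units in one fixed row. Finally `φ` and `· * X` agree on all products `A * B`, and these
span `M_{m×p}` because `E_{ik} = E_{iz} * E_{zk}`.
-/

open Matrix

namespace Matrix

variable {l m n p q R : Type*} [Semiring R]
variable [Fintype m] [Fintype n] [Fintype p]
variable [DecidableEq l] [DecidableEq m] [DecidableEq n] [DecidableEq p]

theorem eq_of_forall_mul_eq_mul [Nonempty l] {M N : Matrix m q R}
    (h : ∀ E : Matrix l m R, E * M = E * N) : M = N := by
  obtain ⟨w⟩ := ‹Nonempty l›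
  ext i j
  simpa using congr_fun₂ (h (single w i 1)) w j

theorem linearMap_ext_of_mul [Nonempty n] {M : Type*} [AddCommMonoid M] [Module R M]
    {g₁ g₂ : Matrix m p R →ₗ[R] M}
    (h : ∀ (A : Matrix m n R) (B : Matrix n p R), g₁ (A * B) = g₂ (A * B)) : g₁ = g₂ := by
  obtain ⟨z⟩ := ‹Nonempty n›
  refine ext_linearMap R fun i k => LinearMap.ext_ring ?_
  simpa using h (single i z 1) (single z k 1)

theorem exists_eq_mulRightLinearMap_of_map_mul [Nonempty n]
    (f : Matrix n p R →ₗ[R] Matrix n q R)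
    (hf : ∀ (A : Matrix n n R) (B : Matrix n p R), f (A * B) = A * f B) :
    ∃ X : Matrix p q R, f = mulRightLinearMap n R X := by
  obtain ⟨z⟩ := ‹Nonempty n›
  refine ⟨of fun k j => f (single z k 1) z j, ext_linearMap R fun i k => LinearMap.ext_ring ?_⟩
  have hsingle : single i k (1 : R) = single i z (1 : R) * single z k (1 : R) := by simp
  simp only [LinearMap.comp_apply, singleLinearMap_apply, mulRightLinearMap_apply]
  -- `single i z 1 * M` only sees row `z` of `M`, where both sides agree by the choice of `X`.
  rw [hsingle, hf, Matrix.mul_assoc, single_mul_eq_updateRow_zero,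
    single_mul_eq_updateRow_zero]
  congr 2
  ext j
  simp

end Matrix

theorem stmt0_general {F : Type*} [Field F] (m n p q : ℕ)
    (hm : 0 < m) (hn : 0 < n)
    (φ : Matrix (Fin m) (Fin p) F →ₗ[F] Matrix (Fin m) (Fin q) F)
    (ψ : Matrix (Fin n) (Fin p) F →ₗ[F] Matrix (Fin n) (Fin q) F)
    (h : ∀ (A : Matrix (Fin m) (Fin n) F) (B : Matrix (Fin n) (Fin p) F),
      φ (A * B) = A * ψ B) :
    ∃ X : Matrix (Fin p) (Fin q) F,
      (∀ C : Matrix (Fin m) (Fin p) F, φ C = C * X) ∧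
      (∀ D : Matrix (Fin n) (Fin p) F, ψ D = D * X) := by
  have : Nonempty (Fin m) := ⟨⟨0, hm⟩⟩
  have : Nonempty (Fin n) := ⟨⟨0, hn⟩⟩
  have hψ : ∀ (A : Matrix (Fin n) (Fin n) F) (B : Matrix (Fin n) (Fin p) F),
      ψ (A * B) = A * ψ B := fun A B =>
    eq_of_forall_mul_eq_mul (l := Fin m) fun E => by
      rw [← h, ← Matrix.mul_assoc, ← Matrix.mul_assoc, h]
  obtain ⟨X, hX⟩ := exists_eq_mulRightLinearMap_of_map_mul ψ hψ
  have hφ : φ = mulRightLinearMap (Fin m) F X :=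
    linearMap_ext_of_mul (n := Fin n) fun A B => by
      rw [h, hX]
      simp [Matrix.mul_assoc]
  exact ⟨X, fun C => by rw [hφ]; rfl, fun D => by rw [hX]; rfl⟩

/-- If linear maps `φ : M_{m×p} → M_{m×q}` and `ψ : M_{n×p} → M_{n×q}` satisfy
`φ(A·B) = A·ψ(B)` for all `A ∈ M_{m×n}`, `B ∈ M_{n×p}`, then there is `X ∈ M_{p×q}` with
`φ(C) = C·X` and `ψ(D) = D·X`. -/
theorem stmt0 {F : Type*} [Field F] (m n p q : ℕ)
    (hm : 0 < m) (hn : 0 < n) (hp : 0 < p) (hq : 0 < q)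
    (φ : Matrix (Fin m) (Fin p) F →ₗ[F] Matrix (Fin m) (Fin q) F)
    (ψ : Matrix (Fin n) (Fin p) F →ₗ[F] Matrix (Fin n) (Fin q) F)
    (h : ∀ (A : Matrix (Fin m) (Fin n) F) (B : Matrix (Fin n) (Fin p) F),
      φ (A * B) = A * ψ B) :
    ∃ X : Matrix (Fin p) (Fin q) F,
      (∀ C : Matrix (Fin m) (Fin p) F, φ C = C * X) ∧
      (∀ D : Matrix (Fin n) (Fin p) F, ψ D = D * X) :=
  stmt0_general m n p q hm hn φ ψ h
end

section
/- Let m, n, p, q be positive integers and let φ : M_{m×p} → M_{m×q} and ψ : M_{q×n} → M_{p×n} be F-linear maps such that φ(A)·B = A·ψ(B) for all A ∈ M_{m×p} and B ∈ M_{q×n}. Then there exists a matrix X ∈ M_{p×q} such that φ(C) = C·X for all C ∈ M_{m×p} and ψ(D) = X·D for all D ∈ M_{q×n}. -/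
/-- If linear maps `φ : M_{m×p} → M_{m×q}` and `ψ : M_{q×n} → M_{p×n}` satisfy
`φ(A)·B = A·ψ(B)` for all `A ∈ M_{m×p}`, `B ∈ M_{q×n}`, then there is `X ∈ M_{p×q}` with
`φ(C) = C·X` and `ψ(D) = X·D`. -/
theorem stmt2 {F : Type*} [Field F] (m n p q : ℕ)
    (hm : 0 < m) (hn : 0 < n) (hp : 0 < p) (hq : 0 < q)
    (φ : Matrix (Fin m) (Fin p) F →ₗ[F] Matrix (Fin m) (Fin q) F)
    (ψ : Matrix (Fin q) (Fin n) F →ₗ[F] Matrix (Fin p) (Fin n) F)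
    (h : ∀ (A : Matrix (Fin m) (Fin p) F) (B : Matrix (Fin q) (Fin n) F),
      φ A * B = A * ψ B) :
    ∃ X : Matrix (Fin p) (Fin q) F,
      (∀ C : Matrix (Fin m) (Fin p) F, φ C = C * X) ∧
      (∀ D : Matrix (Fin q) (Fin n) F, ψ D = X * D) := by
  set e0 : Fin m := ⟨0, hm⟩
  set s0 : Fin n := ⟨0, hn⟩
  set X : Matrix (Fin p) (Fin q) F :=
    fun i j => φ (Matrix.single e0 i 1) e0 j with hX
  have hpsi : ∀ D : Matrix (Fin q) (Fin n) F, ψ D = X * D := by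
    intro D
    ext i s
    have := congrFun (congrFun (h (Matrix.single e0 i 1) D) e0) s
    simp only [Matrix.mul_apply, Matrix.single, Matrix.of_apply, ite_mul, one_mul,
      zero_mul, Finset.sum_ite_eq, Finset.mem_univ, if_true, eq_self_iff_true, true_and] at this ⊢
    rw [← this]
    rfl
  refine ⟨X, ?_, hpsi⟩
  intro C
  ext r j
  have := congrFun (congrFun (h C (Matrix.single j s0 1)) r) s0
  rw [hpsi, ← Matrix.mul_assoc] at this
  simp only [Matrix.mul_apply, Matrix.single, Matrix.of_apply, mul_ite, mul_one,
    mul_zero, Finset.sum_ite_eq', Finset.sum_ite_eq, Finset.mem_univ, if_true, eq_self_iff_true, and_true] at this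
  rw [Matrix.mul_apply]
  exact this
end

section
/- Let p, q, r be positive integers and let f : M_{p×r} → M_{p×r}, g : M_{p×q} → M_{p×q}, h : M_{q×r} → M_{q×r} be F-linear maps such that f(A·B) = g(A)·B + A·h(B) for all A ∈ M_{p×q} and B ∈ M_{q×r}. Then there exist matrices X ∈ M_{p×p}, Y ∈ M_{r×r}, Z ∈ M_{q×q} such that f(C) = X·C + C·Y for all C ∈ M_{p×r}, g(A) = X·A + A·Z for all A ∈ M_{p×q}, and h(B) = B·Y − Z·B for all B ∈ M_{q×r}. -/
/-!
With matrix units `E i j` and a fixed middle index `o`, write `C = ∑ C i j • (E i o * E o j)`;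
applying the relation to each product `E i o * E o j` shows `f C = X * C + C * Y`, where
`X` collects the `g (E i o)` and `Y` the `h (E o j)`. Once `f` is known, the relation with
`B = E k b` determines every column-probe `g A * E k b`, hence `g`, and the relation with
`A = E a k` determines every row-probe `E a k * h B`, hence `h`.
-/

open Matrix

namespace Matrix

variable {R : Type*} [CommRing R]

section MatrixUnits

variable {ι κ l m : Type*} [Fintype ι] [DecidableEq ι] [DecidableEq κ]
  [Fintype m] [DecidableEq m]

theorem sum_mul_single_mul_single (M : ι → Matrix l m R) (o : m) (i : ι) (j : κ) (c : R) :
    (∑ i' : ι, M i' * single o i' (1 : R)) * single i j c = M i * single o j c := by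
  rw [Matrix.sum_mul, Finset.sum_eq_single i]
  · rw [Matrix.mul_assoc, single_mul_single_same, one_mul]
  · intro i' _ hi'
    rw [Matrix.mul_assoc, single_mul_single_of_ne _ _ _ _ hi', Matrix.mul_zero]
  · simp

theorem single_mul_sum_single_mul (M : ι → Matrix m l R) (o : m) (i : κ) (j : ι) (c : R) :
    single i j c * ∑ j' : ι, single j' o (1 : R) * M j' = single i o c * M j := by
  rw [Matrix.mul_sum, Finset.sum_eq_single j]
  · rw [← Matrix.mul_assoc, single_mul_single_same, mul_one]
  · intro j' _ hj'
    rw [← Matrix.mul_assoc, single_mul_single_of_ne _ _ _ _ (Ne.symm hj'), Matrix.zero_mul]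
  · simp

theorem ext_of_mul_single {M M' : Matrix l m R} (b : κ)
    (h : ∀ k : m, M * single k b (1 : R) = M' * single k b (1 : R)) : M = M' := by
  ext i k
  simpa only [mul_single_apply_same, mul_one] using congrFun (congrFun (h k) i) b

theorem ext_of_single_mul {M M' : Matrix m l R} (a : κ)
    (h : ∀ k : m, single a k (1 : R) * M = single a k (1 : R) * M') : M = M' := by
  ext k j
  simpa only [single_mul_apply_same, one_mul] using congrFun (congrFun (h k) a) j

end MatrixUnits

def IsLeibnizTriple {l m n : Type*} [Fintype m] (f : Matrix l n R → Matrix l n R)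
    (g : Matrix l m R → Matrix l m R) (h : Matrix m n R → Matrix m n R) : Prop :=
  ∀ A B, f (A * B) = g A * B + A * h B

namespace IsLeibnizTriple

variable {l m n : Type*} [Fintype l] [Fintype m] [DecidableEq m] [Fintype n]
  {g : Matrix l m R → Matrix l m R} {h : Matrix m n R → Matrix m n R}

theorem exists_eq_mul_add_mul [DecidableEq l] [DecidableEq n]
    {f : Matrix l n R →ₗ[R] Matrix l n R} (hL : IsLeibnizTriple f g h) (o : m) :
    ∃ (X : Matrix l l R) (Y : Matrix n n R), ∀ C, f C = X * C + C * Y := by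
  set X : Matrix l l R := ∑ i, g (single i o (1 : R)) * single o i (1 : R)
  set Y : Matrix n n R := ∑ j, single j o (1 : R) * h (single o j (1 : R))
  suffices f = mulLeftLinearMap n R X + mulRightLinearMap l R Y from
    ⟨X, Y, fun C => LinearMap.congr_fun this C⟩
  refine ext_linearMap R fun i j => LinearMap.ext_ring ?_
  calc f (single i j (1 : R)) = f (single i o (1 : R) * single o j (1 : R)) := by
        rw [single_mul_single_same, mul_one]
    _ = g (single i o (1 : R)) * single o j (1 : R) +
          single i o (1 : R) * h (single o j (1 : R)) := hL _ _
    _ = X * single i j (1 : R) + single i j (1 : R) * Y := by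
        rw [sum_mul_single_mul_single, single_mul_sum_single_mul]

variable {f : Matrix l n R → Matrix l n R} {X : Matrix l l R} {Y : Matrix n n R}

theorem exists_left_eq_mul_add_mul [DecidableEq n] (hL : IsLeibnizTriple f g h)
    (hf : ∀ C, f C = X * C + C * Y) (b : n) :
    ∃ Z : Matrix m m R, ∀ A, g A = X * A + A * Z := by
  set W := fun k : m => single k b (1 : R) * Y - h (single k b (1 : R))
  refine ⟨∑ k, W k * single b k (1 : R), fun A => ext_of_mul_single b fun k => ?_⟩
  calc g A * single k b (1 : R) = (g A * single k b (1 : R)) * single b b (1 : R) := by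
        rw [Matrix.mul_assoc, single_mul_single_same, mul_one]
    _ = (f (A * single k b (1 : R)) - A * h (single k b (1 : R))) * single b b (1 : R) := by
        rw [hL, add_sub_cancel_right]
    _ = X * A * single k b (1 : R) * single b b (1 : R) + A * (W k * single b b (1 : R)) := by
        rw [hf]
        simp only [W, Matrix.mul_sub, Matrix.sub_mul, Matrix.add_mul, Matrix.mul_assoc]
        abel
    _ = (X * A + A * ∑ k, W k * single b k (1 : R)) * single k b (1 : R) := by
        rw [Matrix.mul_assoc _ (single k b (1 : R)), single_mul_single_same, mul_one,
          Matrix.add_mul, Matrix.mul_assoc A, sum_mul_single_mul_single]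

theorem right_eq_mul_sub_mul [DecidableEq l] {Z : Matrix m m R} (hL : IsLeibnizTriple f g h)
    (hf : ∀ C, f C = X * C + C * Y) (hg : ∀ A, g A = X * A + A * Z) (a : l) (B : Matrix m n R) :
    h B = B * Y - Z * B :=
  ext_of_single_mul a fun k => calc
    single a k (1 : R) * h B = f (single a k (1 : R) * B) - g (single a k (1 : R)) * B := by
      rw [hL, add_sub_cancel_left]
    _ = single a k (1 : R) * (B * Y - Z * B) := by
      rw [hf, hg]
      simp only [Matrix.mul_sub, Matrix.add_mul, Matrix.mul_assoc]
      abel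

end IsLeibnizTriple

end Matrix

/-- If linear maps `f : M_{p×r} → M_{p×r}`, `g : M_{p×q} → M_{p×q}`,
`h : M_{q×r} → M_{q×r}` satisfy `f(A·B) = g(A)·B + A·h(B)` for all `A ∈ M_{p×q}`,
`B ∈ M_{q×r}`, then there exist `X ∈ M_{p×p}`, `Y ∈ M_{r×r}`, `Z ∈ M_{q×q}` with
`f(C) = X·C + C·Y`, `g(A) = X·A + A·Z`, `h(B) = B·Y − Z·B`. -/
theorem stmt3 {F : Type*} [Field F] (p q r : ℕ)
    (hp : 0 < p) (hq : 0 < q) (hr : 0 < r)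
    (f : Matrix (Fin p) (Fin r) F →ₗ[F] Matrix (Fin p) (Fin r) F)
    (g : Matrix (Fin p) (Fin q) F →ₗ[F] Matrix (Fin p) (Fin q) F)
    (h : Matrix (Fin q) (Fin r) F →ₗ[F] Matrix (Fin q) (Fin r) F)
    (hrel : ∀ (A : Matrix (Fin p) (Fin q) F) (B : Matrix (Fin q) (Fin r) F),
      f (A * B) = g A * B + A * h B) :
    ∃ (X : Matrix (Fin p) (Fin p) F) (Y : Matrix (Fin r) (Fin r) F)
      (Z : Matrix (Fin q) (Fin q) F),
      (∀ C : Matrix (Fin p) (Fin r) F, f C = X * C + C * Y) ∧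
      (∀ A : Matrix (Fin p) (Fin q) F, g A = X * A + A * Z) ∧
      (∀ B : Matrix (Fin q) (Fin r) F, h B = B * Y - Z * B) := by
  have hL : IsLeibnizTriple f g h := hrel
  obtain ⟨X, Y, hf⟩ := hL.exists_eq_mul_add_mul ⟨0, hq⟩
  obtain ⟨Z, hg⟩ := hL.exists_left_eq_mul_add_mul hf ⟨0, hr⟩
  exact ⟨X, Y, Z, hf, hg, hL.right_eq_mul_sub_mul hf hg ⟨0, hp⟩⟩
end

section
/- Let f be a derivation of N and let k be an integer with 1 < k < t−1. Then for every A ∈ N^{k,k+1} and all row/column indices r, s, the entry f(A) r s is zero unless b r = k, or b s = k+1, or (b r, b s) = (1, t). (That is, f(N^{k,k+1}) is contained in the sum of the blocks (p, k+1) with p ≤ k, the blocks (k, q) with q ≥ k+1, and the center block (1, t).) -/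
/-!
Let `A ∈ N^{k,k+1}` and let `(r, s)` with `b r < b s` lie outside the `k`-th block row, the
`(k+1)`-th block column and the center. If `r` is not in the first block, pick `r'` in block `1`;
otherwise `s` is not in the last block, and pick `s'` in block `t`. The elementary matrix
`X = E_{r' r}` (resp. `E_{s s'}`) lies in `N` and commutes with `A`, so the derivation property
gives `[X, f A] = [A, f X]`. The entry `(r', s)` (resp. `(r, s')`) of the left side is
`± (f A) r s`, while that of the right side vanishes because `A` is supported in the block
`(k, k+1)`.
-/

/-- `A` is a strictly block upper triangular matrix relative to the block function `b`
(index `r` lies in block `b r`): `A r s = 0` whenever `b r ≥ b s`. -/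
def InN {F : Type*} [Field F] {n : ℕ} (b : Fin n → ℕ)
    (A : Matrix (Fin n) (Fin n) F) : Prop :=
  ∀ r s, b s ≤ b r → A r s = 0

/-- `A` lies in the `(i,j)` block `N^{ij}`: `A r s = 0` unless `b r = i` and `b s = j`. -/
def InBlk {F : Type*} [Field F] {n : ℕ} (b : Fin n → ℕ) (i j : ℕ)
    (A : Matrix (Fin n) (Fin n) F) : Prop :=
  ∀ r s, ¬(b r = i ∧ b s = j) → A r s = 0

/-- `f` is a derivation of the Lie algebra `N` of strictly block upper triangular matrices:
it maps `N` into `N` and satisfies `f [X,Y] = [f X, Y] + [X, f Y]` on `N`,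
where `[X,Y] = XY - YX`. -/
def IsDerN {F : Type*} [Field F] {n : ℕ} (b : Fin n → ℕ)
    (f : Matrix (Fin n) (Fin n) F →ₗ[F] Matrix (Fin n) (Fin n) F) : Prop :=
  (∀ A, InN b A → InN b (f A)) ∧
  ∀ X Y, InN b X → InN b Y →
    f (X * Y - Y * X) = (f X * Y - Y * f X) + (X * f Y - f Y * X)

open Matrix

section LieSingle

variable {ι R : Type*} [Fintype ι] [DecidableEq ι] [Ring R]

theorem lie_single_apply_of_row_ne {p q r : ι} (B : Matrix ι ι R) (h : r ≠ p) :
    (single p q (1 : R) * B - B * single p q 1 : Matrix ι ι R) r q = -B r p := by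
  rw [Matrix.sub_apply, single_mul_apply_of_ne (h := h), mul_single_apply_same, mul_one, zero_sub]

theorem lie_single_apply_of_col_ne {p q s : ι} (B : Matrix ι ι R) (h : s ≠ q) :
    (single p q (1 : R) * B - B * single p q 1 : Matrix ι ι R) p s = B q s := by
  rw [Matrix.sub_apply, single_mul_apply_same, mul_single_apply_of_ne (hbj := h), one_mul, sub_zero]

end LieSingle

section BlockMatrices

variable {F : Type*} [Field F] {n : ℕ} {b : Fin n → ℕ} {i j : ℕ}
  {A : Matrix (Fin n) (Fin n) F}

theorem inN_single {p q : Fin n} (h : b p < b q) (c : F) : InN b (single p q c) := by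
  intro u v hvu
  apply single_apply_of_ne
  rintro ⟨rfl, rfl⟩
  omega

namespace InBlk

theorem apply_eq_zero_of_row_ne (hA : InBlk b i j A) {r : Fin n} (h : b r ≠ i) (s : Fin n) :
    A r s = 0 :=
  hA r s fun hrs => h hrs.1

theorem apply_eq_zero_of_col_ne (hA : InBlk b i j A) (r : Fin n) {s : Fin n} (h : b s ≠ j) :
    A r s = 0 :=
  hA r s fun hrs => h hrs.2

theorem inN (hA : InBlk b i j A) (hij : i < j) : InN b A := by
  intro r s hsr
  apply hA
  rintro ⟨rfl, rfl⟩
  omega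

theorem single_mul_eq_zero (hA : InBlk b i j A) (p : Fin n) {q : Fin n} (hq : b q ≠ i) (c : F) :
    single p q c * A = 0 := by
  refine Matrix.ext fun u v => ?_
  by_cases hu : u = p
  · rw [hu, single_mul_apply_same, hA.apply_eq_zero_of_row_ne hq, mul_zero, Matrix.zero_apply]
  · rw [single_mul_apply_of_ne (h := hu), Matrix.zero_apply]

theorem mul_single_eq_zero (hA : InBlk b i j A) {p : Fin n} (hp : b p ≠ j) (q : Fin n) (c : F) :
    A * single p q c = 0 := by
  refine Matrix.ext fun u v => ?_
  by_cases hv : v = q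
  · rw [hv, mul_single_apply_same, hA.apply_eq_zero_of_col_ne _ hp, zero_mul, Matrix.zero_apply]
  · rw [mul_single_apply_of_ne (hbj := hv), Matrix.zero_apply]

theorem lie_single_eq_zero (hA : InBlk b i j A) {p q : Fin n} (hp : b p ≠ j) (hq : b q ≠ i)
    (c : F) : single p q c * A - A * single p q c = 0 := by
  rw [hA.single_mul_eq_zero p hq, hA.mul_single_eq_zero hp q, sub_zero]

theorem lie_apply_eq_zero (hA : InBlk b i j A) (M : Matrix (Fin n) (Fin n) F) {r s : Fin n}
    (hr : b r ≠ i) (hs : b s ≠ j) : (A * M - M * A) r s = 0 := by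
  have hAM : (A * M) r s = 0 := by
    simp only [mul_apply, hA.apply_eq_zero_of_row_ne hr, zero_mul, Finset.sum_const_zero]
  have hMA : (M * A) r s = 0 := by
    simp only [mul_apply, hA.apply_eq_zero_of_col_ne _ hs, mul_zero, Finset.sum_const_zero]
  rw [Matrix.sub_apply, hAM, hMA, sub_zero]

end InBlk

namespace IsDerN

variable {f : Matrix (Fin n) (Fin n) F →ₗ[F] Matrix (Fin n) (Fin n) F}

theorem lie_eq_of_lie_eq_zero (hf : IsDerN b f) {X : Matrix (Fin n) (Fin n) F} (hX : InN b X)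
    (hA : InN b A) (hXA : X * A - A * X = 0) :
    X * f A - f A * X = A * f X - f X * A := by
  have h := hf.2 X A hX hA
  rw [hXA, map_zero, eq_comm, add_eq_zero_iff_neg_eq] at h
  rw [← h, neg_sub]

theorem apply_eq_zero_of_earlier_block (hf : IsDerN b f) (hA : InBlk b i j A) (hij : i < j)
    {r r' s : Fin n} (hrs : r ≠ s) (hr'r : b r' < b r) (hr : b r ≠ i) (hs : b s ≠ j)
    (hr'i : b r' ≠ i) (hr'j : b r' ≠ j) : f A r s = 0 := by
  have hlie := congrFun (congrFun (hf.lie_eq_of_lie_eq_zero (inN_single hr'r 1) (hA.inN hij)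
    (hA.lie_single_eq_zero hr'j hr 1)) r') s
  rwa [lie_single_apply_of_col_ne _ hrs.symm, hA.lie_apply_eq_zero _ hr'i hs] at hlie

theorem apply_eq_zero_of_later_block (hf : IsDerN b f) (hA : InBlk b i j A) (hij : i < j)
    {r s s' : Fin n} (hrs : r ≠ s) (hss' : b s < b s') (hr : b r ≠ i) (hs : b s ≠ j)
    (hs'i : b s' ≠ i) (hs'j : b s' ≠ j) : f A r s = 0 := by
  have hlie := congrFun (congrFun (hf.lie_eq_of_lie_eq_zero (inN_single hss' 1) (hA.inN hij)
    (hA.lie_single_eq_zero hs hs'i 1)) r) s'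
  rwa [lie_single_apply_of_row_ne _ hrs, hA.lie_apply_eq_zero _ hr hs'j, neg_eq_zero] at hlie

end IsDerN

end BlockMatrices

theorem stmt4_general {F : Type*} [Field F] {n t : ℕ} (b : Fin n → ℕ)
    (hlb : ∀ r, 1 ≤ b r) (hub : ∀ r, b r ≤ t)
    (hsurj : ∀ k, 1 ≤ k → k ≤ t → ∃ r, b r = k)
    (f : Matrix (Fin n) (Fin n) F →ₗ[F] Matrix (Fin n) (Fin n) F)
    (hf : IsDerN b f)
    (k : ℕ) (hk1 : 1 < k) (hk2 : k < t - 1) :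
    ∀ A, InBlk b k (k + 1) A → ∀ r s,
      ¬(b r = k) → ¬(b s = k + 1) → ¬(b r = 1 ∧ b s = t) →
      f A r s = 0 := by
  intro A hA r s hr hs hcenter
  rcases le_or_gt (b s) (b r) with hsr | hrs
  · exact hf.1 A (hA.inN k.lt_succ_self) r s hsr
  have hne : r ≠ s := ne_of_apply_ne b hrs.ne
  rcases (hlb r).eq_or_lt with hr1 | hr1
  · obtain ⟨s', hs'⟩ := hsurj t (by omega) le_rfl
    have hst : b s < t := (hub s).lt_of_ne fun h => hcenter ⟨hr1.symm, h⟩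
    exact hf.apply_eq_zero_of_later_block (s' := s') hA k.lt_succ_self hne (by omega) hr hs
      (by omega) (by omega)
  · obtain ⟨r', hr'⟩ := hsurj 1 le_rfl (by omega)
    exact hf.apply_eq_zero_of_earlier_block (r' := r') hA k.lt_succ_self hne (by omega) hr hs
      (by omega) (by omega)

/-- for a derivation `f` of `N` and `1 < k < t-1`, the image `f(N^{k,k+1})`
lies in the `k`-th block row, the `(k+1)`-th block column, and the center block `(1,t)`. -/
theorem stmt4 {F : Type*} [Field F] {n t : ℕ} (b : Fin n → ℕ)
    (hn : 1 ≤ n) (ht : 3 ≤ t) (hmono : Monotone b)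
    (hlb : ∀ r, 1 ≤ b r) (hub : ∀ r, b r ≤ t)
    (hsurj : ∀ k, 1 ≤ k → k ≤ t → ∃ r, b r = k)
    (f : Matrix (Fin n) (Fin n) F →ₗ[F] Matrix (Fin n) (Fin n) F)
    (hf : IsDerN b f)
    (k : ℕ) (hk1 : 1 < k) (hk2 : k < t - 1) :
    ∀ A, InBlk b k (k + 1) A → ∀ r s,
      ¬(b r = k) → ¬(b s = k + 1) → ¬(b r = 1 ∧ b s = t) →
      f A r s = 0 :=
  stmt4_general b hlb hub hsurj f hf k hk1 hk2
end

section
/- Suppose block 1 contains at least two indices, i.e. #{r : b r = 1} ≥ 2. Then for every derivation f of N, every A ∈ N^{12}, and all indices r, s with b r = 2 and b s = t, the entry f(A) r s is zero. -/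
/-!
Let `p ≠ q` be two indices of block 1 and `E = E_{pr}`. Since `E` and `A ∈ N^{12}` commute
(both products vanish), the derivation rule at the entry `(p, s)` gives
`f(A)_{rs} = (A · f(E))_{ps} = ∑_c A_{pc} f(E)_{cs}`, where only `c` in block 2 contribute.
Applying the same identity to `E` itself, with `q` in place of `p`, gives
`f(E)_{cs} = (E · f(E_{qc}))_{qs}`, which vanishes because row `q` of `E` is zero.
-/

section

open Matrix

variable {F : Type*} [Field F] {n : ℕ} {b : Fin n → ℕ} {i j : ℕ}

lemma inBlk_single (p r : Fin n) (c : F) : InBlk b (b p) (b r) (single p r c) := by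
  intro u v huv
  refine single_apply_of_ne _ _ _ _ _ ?_
  rintro ⟨rfl, rfl⟩
  exact huv ⟨rfl, rfl⟩

lemma InBlk.inN_s7 {A : Matrix (Fin n) (Fin n) F} (hA : InBlk b i j A) (hij : i < j) : InN b A :=
  fun u v huv => hA u v fun ⟨hu, hv⟩ => by omega

lemma InBlk.mul_apply_eq_zero {A : Matrix (Fin n) (Fin n) F} (hA : InBlk b i j A)
    (M : Matrix (Fin n) (Fin n) F) {u v : Fin n} (hv : b v ≠ j) : (M * A) u v = 0 :=
  mul_apply.trans <| Finset.sum_eq_zero fun c _ => by rw [hA c v fun h => hv h.2, mul_zero]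

lemma InBlk.mul_eq_zero {k l : ℕ} {A B : Matrix (Fin n) (Fin n) F} (hA : InBlk b i j A)
    (hB : InBlk b k l B) (hjk : j ≠ k) : A * B = 0 := by
  ext u v
  refine mul_apply.trans <| Finset.sum_eq_zero fun c _ => ?_
  by_cases hc : b c = j
  · rw [hB c v fun h => hjk (hc ▸ h.1), mul_zero]
  · rw [hA u c fun h => hc h.2, zero_mul]

namespace IsDerN

variable {f : Matrix (Fin n) (Fin n) F →ₗ[F] Matrix (Fin n) (Fin n) F}

lemma apply_eq_mul_apply_single (hf : IsDerN b f) (hij : i < j)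
    {A : Matrix (Fin n) (Fin n) F} (hA : InBlk b i j A) {p r s : Fin n}
    (hp : b p = i) (hr : b r = j) (hs : b s ≠ j) :
    f A r s = (A * f (single p r 1)) p s := by
  have hE : InBlk b i j (single p r (1 : F)) := hp ▸ hr ▸ inBlk_single p r 1
  have hcomm := hf.2 _ A (hE.inN_s7 hij) (hA.inN_s7 hij)
  rw [hE.mul_eq_zero hA hij.ne', hA.mul_eq_zero hE hij.ne', sub_zero, map_zero] at hcomm
  have hps := congrFun (congrFun hcomm p) s
  simp only [Matrix.add_apply, Matrix.sub_apply, Matrix.zero_apply, hA.mul_apply_eq_zero _ hs,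
    mul_single_apply_of_ne _ _ _ _ _ (fun h : s = r => hs (h ▸ hr)), single_mul_apply_same,
    one_mul] at hps
  linear_combination -hps

lemma apply_eq_zero_of_inBlk (hf : IsDerN b f) (hij : i < j) {p q : Fin n} (hpq : p ≠ q)
    (hp : b p = i) (hq : b q = i) {A : Matrix (Fin n) (Fin n) F} (hA : InBlk b i j A)
    {r s : Fin n} (hr : b r = j) (hs : b s ≠ j) : f A r s = 0 := by
  have hE : InBlk b i j (single p r (1 : F)) := hp ▸ hr ▸ inBlk_single p r 1
  have hfE : ∀ c, b c = j → f (single p r 1) c s = 0 := fun c hc => by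
    rw [hf.apply_eq_mul_apply_single hij hE hq hc hs, single_mul_apply_of_ne _ _ _ _ _ hpq.symm]
  rw [hf.apply_eq_mul_apply_single hij hA hp hr hs, mul_apply]
  refine Finset.sum_eq_zero fun c _ => ?_
  by_cases hc : b c = j
  · rw [hfE c hc, mul_zero]
  · rw [hA p c fun h => hc h.2, zero_mul]

end IsDerN

end

theorem stmt7_general {F : Type*} [Field F] {n t : ℕ} (b : Fin n → ℕ)
    (ht : 3 ≤ t)
    (hrow : 2 ≤ (Finset.univ.filter fun r => b r = 1).card)
    (f : Matrix (Fin n) (Fin n) F →ₗ[F] Matrix (Fin n) (Fin n) F)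
    (hf : IsDerN b f) :
    ∀ A, InBlk b 1 2 A → ∀ r s, b r = 2 → b s = t → f A r s = 0 := by
  intro A hA r s hr hs
  obtain ⟨p, hp, q, hq, hpq⟩ := Finset.one_lt_card.mp hrow
  exact hf.apply_eq_zero_of_inBlk one_lt_two hpq (Finset.mem_filter.mp hp).2
    (Finset.mem_filter.mp hq).2 hA hr (by omega)

/-- if block 1 has at least two indices, then for every derivation `f` of `N`
the `(2,t)` block of `f(N^{12})` vanishes. -/
theorem stmt7 {F : Type*} [Field F] {n t : ℕ} (b : Fin n → ℕ)
    (hn : 1 ≤ n) (ht : 3 ≤ t) (hmono : Monotone b)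
    (hlb : ∀ r, 1 ≤ b r) (hub : ∀ r, b r ≤ t)
    (hsurj : ∀ k, 1 ≤ k → k ≤ t → ∃ r, b r = k)
    (hrow : 2 ≤ (Finset.univ.filter fun r => b r = 1).card)
    (f : Matrix (Fin n) (Fin n) F →ₗ[F] Matrix (Fin n) (Fin n) F)
    (hf : IsDerN b f) :
    ∀ A, InBlk b 1 2 A → ∀ r s, b r = 2 → b s = t → f A r s = 0 :=
  stmt7_general b ht hrow f hf
end

section
/- Suppose block 1 consists of a single index r₁, i.e. #{r : b r = 1} = 1 with b r₁ = 1. For an index u with b u = 2, let E_u ∈ N^{12} denote the matrix with entry 1 in position (r₁, u) and 0 elsewhere. Then for every derivation f of N, all indices u, v with b u = b v = 2, and every index s with b s = t, one has f(E_u) v s = f(E_v) u s. -/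
/- Two matrix units `E_{ij}`, `E_{ik}` with `i` outside `{j, k}` multiply to zero in both orders,
so the derivation identity for their (zero) bracket is a linear relation between `f E_{ij}` and
`f E_{ik}`; its `(i, s)` entry is the claimed symmetry. -/

open Matrix

theorem inN_single_s8 {F : Type*} [Field F] {n : ℕ} {b : Fin n → ℕ} {i j : Fin n}
    (hij : b i < b j) (c : F) : InN b (single i j c) := by
  intro r s hsr
  apply single_apply_of_ne
  rintro ⟨rfl, rfl⟩
  omega

theorem IsDerN.bracket_add_bracket_eq_zero_of_mul_eq_zero {F : Type*} [Field F] {n : ℕ}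
    {b : Fin n → ℕ}
    {f : Matrix (Fin n) (Fin n) F →ₗ[F] Matrix (Fin n) (Fin n) F} (hf : IsDerN b f)
    {X Y : Matrix (Fin n) (Fin n) F} (hX : InN b X) (hY : InN b Y)
    (hXY : X * Y = 0) (hYX : Y * X = 0) :
    (f X * Y - Y * f X) + (X * f Y - f Y * X) = 0 := by
  rw [← hf.2 X Y hX hY, hXY, hYX, sub_zero, map_zero]

theorem mul_single_sub_single_mul_apply_of_ne {F : Type*} [Field F] {n : ℕ}
    (A : Matrix (Fin n) (Fin n) F) (i k : Fin n) {s : Fin n} (hsk : s ≠ k) :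
    (A * single i k 1 - single i k 1 * A : Matrix (Fin n) (Fin n) F) i s = -A k s := by
  rw [Matrix.sub_apply, mul_single_apply_of_ne 1 i k i s hsk, single_mul_apply_same, one_mul,
    zero_sub]

theorem IsDerN.apply_single_apply_comm {F : Type*} [Field F] {n : ℕ} {b : Fin n → ℕ}
    {f : Matrix (Fin n) (Fin n) F →ₗ[F] Matrix (Fin n) (Fin n) F} (hf : IsDerN b f)
    {i j k s : Fin n} (hij : b i < b j) (hik : b i < b k) (hsj : s ≠ j) (hsk : s ≠ k) :
    f (single i j 1) k s = f (single i k 1) j s := by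
  have hji : j ≠ i := fun h => by subst h; omega
  have hki : k ≠ i := fun h => by subst h; omega
  have hzero := hf.bracket_add_bracket_eq_zero_of_mul_eq_zero (inN_single_s8 hij 1) (inN_single_s8 hik 1)
    (single_mul_single_of_ne _ _ _ _ hji _) (single_mul_single_of_ne _ _ _ _ hki _)
  have hentry := congrFun (congrFun hzero i) s
  rw [Matrix.add_apply, mul_single_sub_single_mul_apply_of_ne _ i k hsk, ← neg_sub,
    Matrix.neg_apply, mul_single_sub_single_mul_apply_of_ne _ i j hsj, Matrix.zero_apply] at hentry
  linear_combination -hentry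

theorem stmt8_general {F : Type*} [Field F] {n t : ℕ} (b : Fin n → ℕ)
    (ht : 3 ≤ t)
    (r₁ : Fin n) (hr₁ : b r₁ = 1)
    (f : Matrix (Fin n) (Fin n) F →ₗ[F] Matrix (Fin n) (Fin n) F)
    (hf : IsDerN b f) :
    ∀ u v, b u = 2 → b v = 2 → ∀ s, b s = t →
      f (Matrix.single r₁ u (1 : F)) v s
        = f (Matrix.single r₁ v (1 : F)) u s := by
  intro u v hu hv s hs
  have hsu : s ≠ u := fun h => by subst h; omega
  have hsv : s ≠ v := fun h => by subst h; omega
  exact hf.apply_single_apply_comm (by omega) (by omega) hsu hsv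

/-- if block 1 is a single index `r₁`, then for every derivation `f` of `N`,
the `i`-th row of `f(E^{12}_{1j})_{2t}` equals the `j`-th row of `f(E^{12}_{1i})_{2t}`:
`f(E_u) v s = f(E_v) u s` for `b u = b v = 2`, `b s = t`. -/
theorem stmt8 {F : Type*} [Field F] {n t : ℕ} (b : Fin n → ℕ)
    (hn : 1 ≤ n) (ht : 3 ≤ t) (hmono : Monotone b)
    (hlb : ∀ r, 1 ≤ b r) (hub : ∀ r, b r ≤ t)
    (hsurj : ∀ k, 1 ≤ k → k ≤ t → ∃ r, b r = k)
    (r₁ : Fin n) (hr₁ : b r₁ = 1)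
    (hcard : (Finset.univ.filter fun r => b r = 1).card = 1)
    (f : Matrix (Fin n) (Fin n) F →ₗ[F] Matrix (Fin n) (Fin n) F)
    (hf : IsDerN b f) :
    ∀ u v, b u = 2 → b v = 2 → ∀ s, b s = t →
      f (Matrix.single r₁ u (1 : F)) v s
        = f (Matrix.single r₁ v (1 : F)) u s :=
  stmt8_general b ht r₁ hr₁ f hf
end

section
/- Let f be a derivation of N, and let (p, q) be a pair with 1 ≤ p < q ≤ t and (p, q) ∉ {(1, t−1), (1, t), (2, t)}. Then there exists a matrix Y ∈ N^{pq} such that: (a) for every i with 1 ≤ i < p, every A ∈ N^{ip}, and all indices r, s with b r = i and b s = q, one has f(A) r s = −(A·Y) r s; and (b) for every j with q < j ≤ t, every A ∈ N^{qj}, and all indices r, s with b r = p and b s = j, one has f(A) r s = (Y·A) r s. -/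
open Matrix

section

variable {F : Type*} [Field F] {n : ℕ} {b : Fin n → ℕ} {i j : ℕ} {A : Matrix (Fin n) (Fin n) F}

namespace InBlk

theorem neg (hA : InBlk b i j A) : InBlk b i j (-A) :=
  fun r s h => by rw [neg_apply, hA r s h, neg_zero]

theorem mul_apply_of_row_ne (hA : InBlk b i j A) {r : Fin n} (hr : b r ≠ i)
    (M : Matrix (Fin n) (Fin n) F) (s : Fin n) : (A * M) r s = 0 := by
  rw [mul_apply]
  exact Finset.sum_eq_zero fun w _ => by rw [hA r w fun h => hr h.1, zero_mul]

theorem mul_apply_of_col_ne (hA : InBlk b i j A) {s : Fin n} (hs : b s ≠ j)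
    (M : Matrix (Fin n) (Fin n) F) (r : Fin n) : (M * A) r s = 0 := by
  rw [mul_apply]
  exact Finset.sum_eq_zero fun w _ => by rw [hA w s fun h => hs h.2, mul_zero]

theorem mul_eq_zero_s13 {k l : ℕ} {C : Matrix (Fin n) (Fin n) F} (hA : InBlk b i j A)
    (hC : InBlk b k l C) (hjk : j ≠ k) : A * C = 0 := by
  ext r s
  rw [mul_apply, Matrix.zero_apply]
  refine Finset.sum_eq_zero fun w _ => ?_
  by_cases hw : b w = j
  · rw [hC w s fun h => hjk (hw ▸ h.1), mul_zero]
  · rw [hA r w fun h => hw h.2, zero_mul]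

theorem transpose {b' : Fin n → ℕ} {i' j' : ℕ} (hA : InBlk b i j A)
    (hi : ∀ r, b r = i → b' r = j') (hj : ∀ r, b r = j → b' r = i') : InBlk b' i' j' Aᵀ :=
  fun r s h => hA s r fun ⟨hs, hr⟩ => h ⟨hj r hr, hi s hs⟩

end InBlk

theorem inBlk_single_s13 {u v : Fin n} (hu : b u = i) (hv : b v = j) (c : F) :
    InBlk b i j (single u v c) :=
  fun _ _ h => single_apply_of_ne _ _ _ _ _ <| by rintro ⟨rfl, rfl⟩; exact h ⟨hu, hv⟩

theorem apply_apply_eq_of_single {g h : Matrix (Fin n) (Fin n) F →ₗ[F] Matrix (Fin n) (Fin n) F}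
    {r s : Fin n}
    (hgh : ∀ u v, b u = i → b v = j → g (single u v 1) r s = h (single u v 1) r s)
    (hA : InBlk b i j A) : g A r s = h A r s := by
  have hsingle : ∀ u v, g (single u v (A u v)) r s = h (single u v (A u v)) r s := by
    intro u v
    by_cases huv : b u = i ∧ b v = j
    · rw [← mul_one (A u v), ← smul_eq_mul, ← smul_single, map_smul, map_smul, Matrix.smul_apply,
        Matrix.smul_apply, hgh u v huv.1 huv.2]
    · rw [hA u v huv, single_zero, map_zero, map_zero]
  rw [matrix_eq_sum_single A]
  simp only [map_sum, Matrix.sum_apply]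
  exact Finset.sum_congr rfl fun u _ => Finset.sum_congr rfl fun v _ => hsingle u v

theorem inN_iff_transpose_of_le {t : ℕ} (hb : ∀ r, b r ≤ t) :
    InN (fun r => t + 1 - b r) A ↔ InN b Aᵀ := by
  refine ⟨fun h r s hrs => h s r ?_, fun h r s hrs => h s r ?_⟩ <;>
  · have := hb r
    have := hb s
    dsimp only at hrs ⊢
    omega

theorem conj_transposeLinearEquiv_apply
    (f : Matrix (Fin n) (Fin n) F →ₗ[F] Matrix (Fin n) (Fin n) F) (A : Matrix (Fin n) (Fin n) F) :
    (transposeLinearEquiv (Fin n) (Fin n) F F).conj f A = (f Aᵀ)ᵀ :=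
  rfl

def rightWitness (b : Fin n → ℕ) (f : Matrix (Fin n) (Fin n) F →ₗ[F] Matrix (Fin n) (Fin n) F)
    (p q : ℕ) (c : Fin n) : Matrix (Fin n) (Fin n) F :=
  of fun r u => if b r = p ∧ b u = q then f (single u c 1) r c else 0

section rightWitness

variable {f : Matrix (Fin n) (Fin n) F →ₗ[F] Matrix (Fin n) (Fin n) F} {p q : ℕ} {c : Fin n}

theorem inBlk_rightWitness : InBlk b p q (rightWitness b f p q c) :=
  fun _ _ h => if_neg h

theorem rightWitness_apply {r u : Fin n} (hr : b r = p) (hu : b u = q) :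
    rightWitness b f p q c r u = f (single u c 1) r c :=
  if_pos ⟨hr, hu⟩

theorem apply_eq_rightWitness_mul_of_single {r s : Fin n} (hr : b r = p)
    (hsingle : ∀ u v, b u = q → b v = j →
      f (single u v 1) r s = if s = v then f (single u c 1) r c else 0)
    (hA : InBlk b q j A) : f A r s = (rightWitness b f p q c * A) r s := by
  refine apply_apply_eq_of_single (h := LinearMap.mulLeft F (rightWitness b f p q c))
    (fun u v hu hv => ?_) hA
  rw [hsingle u v hu hv, LinearMap.mulLeft_apply]
  split_ifs with hsv
  · rw [hsv, mul_single_apply_same, mul_one, rightWitness_apply hr hu]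
  · rw [mul_single_apply_of_ne _ _ _ _ _ hsv]

end rightWitness

namespace IsDerN

variable {f : Matrix (Fin n) (Fin n) F →ₗ[F] Matrix (Fin n) (Fin n) F} {p q : ℕ}

theorem apply_mul_apply (hf : IsDerN b f) {m l : ℕ} (hqm : q < m) (hml : m < l)
    {B : Matrix (Fin n) (Fin n) F} (hA : InBlk b q m A) (hB : InBlk b m l B) {r s : Fin n}
    (hr : b r < q) (hs : m < b s) :
    f (A * B) r s = (f A * B) r s := by
  have h := congrFun (congrFun (hf.2 A B (hA.inN hqm) (hB.inN hml)) r) s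
  rw [hB.mul_eq_zero_s13 hA (by omega), sub_zero] at h
  simp only [Matrix.add_apply, Matrix.sub_apply] at h
  rw [h, hB.mul_apply_of_row_ne (by omega), hA.mul_apply_of_row_ne (by omega),
    hA.mul_apply_of_col_ne (by omega)]
  ring

theorem mul_apply_add_mul_apply (hf : IsDerN b f) (hip : i < p) (hpq : p < q)
    (hqj : q < j) {C : Matrix (Fin n) (Fin n) F} (hA : InBlk b i p A) (hC : InBlk b q j C)
    {r s : Fin n} (hr : b r < q) (hs : p < b s) :
    (f A * C) r s + (A * f C) r s = 0 := by
  have h := congrFun (congrFun (hf.2 A C (hA.inN hip) (hC.inN hqj)) r) s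
  rw [hA.mul_eq_zero_s13 hC (by omega), hC.mul_eq_zero_s13 hA (by omega), sub_zero, map_zero] at h
  simp only [Matrix.add_apply, Matrix.sub_apply, Matrix.zero_apply] at h
  rw [hC.mul_apply_of_row_ne (by omega), hA.mul_apply_of_col_ne (by omega)] at h
  linear_combination -h

theorem apply_eq_neg_mul_rightWitness (hf : IsDerN b f) {c r s : Fin n} (hip : i < p)
    (hpq : p < q) (hc : q < b c) (hA : InBlk b i p A) (hr : b r = i) (hs : b s = q) :
    f A r s = -(A * rightWitness b f p q c) r s := by
  have h := hf.mul_apply_add_mul_apply hip hpq hc hA (inBlk_single_s13 hs rfl 1) (r := r) (s := c)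
    (by omega) (by omega)
  have hY : (A * f (single s c 1)) r c = (A * rightWitness b f p q c) r s := by
    simp only [mul_apply]
    refine Finset.sum_congr rfl fun u _ => ?_
    by_cases hu : b u = p
    · rw [rightWitness_apply hu hs]
    · rw [hA r u fun h => hu h.2, zero_mul, zero_mul]
  rw [mul_single_apply_same, mul_one, hY] at h
  linear_combination h

theorem apply_single_apply_eq_ite_of_row_lt (hf : IsDerN b f) {a r u v s : Fin n}
    (ha : b a < p) (hr : b r = p) (hpq : p < q) (hu : b u = q) (hv : q < b v)
    (hs : b s = b v) :
    f (single u v 1) r s = if s = v then -f (single a r 1) a u else 0 := by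
  have h := hf.mul_apply_add_mul_apply ha hpq hv (inBlk_single_s13 rfl hr 1) (inBlk_single_s13 hu rfl 1)
    (r := a) (s := s) (by omega) (by omega)
  rw [single_mul_apply_same, one_mul] at h
  split_ifs with hsv
  · subst hsv
    rw [mul_single_apply_same, mul_one] at h
    linear_combination h
  · rw [mul_single_apply_of_ne _ _ _ _ _ hsv] at h
    linear_combination h

theorem apply_single_apply_eq_ite_of_block_ne (hf : IsDerN b f) {r u v w s : Fin n}
    (hr : b r < q) (hu : b u = q) (hv : q < b v) (hw : q < b w) (hvw : b v ≠ b w)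
    (hs : b s = b v) :
    f (single u v 1) r s = if s = v then f (single u w 1) r w else 0 := by
  rcases lt_or_gt_of_ne hvw with hvw | hvw
  · have h := hf.apply_mul_apply hv hvw (inBlk_single_s13 hu rfl 1) (inBlk_single_s13 hs rfl 1)
      (r := r) (s := w) hr hvw
    rw [mul_single_apply_same, mul_one] at h
    split_ifs with hsv
    · rw [← h, hsv, single_mul_single_same, one_mul]
    · rw [← h, single_mul_single_of_ne _ _ _ _ (Ne.symm hsv), map_zero, Matrix.zero_apply]
  · have h := hf.apply_mul_apply hw hvw (inBlk_single_s13 hu rfl 1) (inBlk_single_s13 rfl rfl 1)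
      (r := r) (s := s) hr (by omega)
    rw [single_mul_single_same, one_mul] at h
    split_ifs with hsv
    · rw [h, hsv, mul_single_apply_same, mul_one]
    · rw [h, mul_single_apply_of_ne _ _ _ _ _ hsv]

theorem apply_eq_rightWitness_mul_of_block_below (hf : IsDerN b f) {a c r s : Fin n}
    (ha : b a < p) (hpq : p < q) (hc : q < b c) (hqj : q < j) (hA : InBlk b q j A)
    (hr : b r = p) (hs : b s = j) : f A r s = (rightWitness b f p q c * A) r s := by
  refine apply_eq_rightWitness_mul_of_single hr (fun u v hu hv => ?_) hA
  rw [hf.apply_single_apply_eq_ite_of_row_lt ha hr hpq hu (hv ▸ hqj) (hs.trans hv.symm),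
    hf.apply_single_apply_eq_ite_of_row_lt ha hr hpq hu hc rfl, if_pos rfl]

theorem apply_eq_rightWitness_mul_of_blocks_above (hf : IsDerN b f) {c d r s : Fin n}
    (hpq : p < q) (hc : b c = q + 1) (hd : b d = q + 2) (hqj : q < j) (hA : InBlk b q j A)
    (hr : b r = p) (hs : b s = j) : f A r s = (rightWitness b f p q c * A) r s := by
  refine apply_eq_rightWitness_mul_of_single hr (fun u v hu hv => ?_) hA
  by_cases hvc : b v = b c
  · rw [hf.apply_single_apply_eq_ite_of_block_ne (v := v) (w := d) (s := s) (by omega) hu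
        (by omega) (by omega) (by omega) (by omega),
      hf.apply_single_apply_eq_ite_of_block_ne (v := c) (w := d) (s := c) (by omega) hu
        (by omega) (by omega) (by omega) rfl, if_pos rfl]
  · exact hf.apply_single_apply_eq_ite_of_block_ne (by omega) hu (by omega) (by omega) hvc
      (by omega)

theorem conj_transpose {t : ℕ} (hb : ∀ r, b r ≤ t) (hf : IsDerN b f) :
    IsDerN (fun r => t + 1 - b r) ((transposeLinearEquiv (Fin n) (Fin n) F F).conj f) := by
  simp only [IsDerN, conj_transposeLinearEquiv_apply, inN_iff_transpose_of_le hb,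
    transpose_transpose]
  refine ⟨fun A hA => hf.1 _ hA, fun X Y hX hY => ?_⟩
  rw [transpose_sub, transpose_mul, transpose_mul, hf.2 _ _ hY hX]
  simp only [transpose_sub, transpose_add, transpose_mul, transpose_transpose]
  abel

theorem exists_apply_eq_neg_mul {t : ℕ} (hb : ∀ r, b r ≤ t) (hf : IsDerN b f) {c d : Fin n}
    (hpq : p < q) (hq : q ≤ t) (hc : b c + 1 = p) (hd : b d + 2 = p) :
    ∃ Y : Matrix (Fin n) (Fin n) F, InBlk b p q Y ∧ ∀ i < p, ∀ A, InBlk b i p A →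
      ∀ r s, b r = i → b s = q → f A r s = -((A * Y) r s) := by
  set W := rightWitness (fun r => t + 1 - b r)
    ((transposeLinearEquiv (Fin n) (Fin n) F F).conj f) (t + 1 - q) (t + 1 - p) c
  refine ⟨-Wᵀ, (inBlk_rightWitness.transpose (fun r _ => by have := hb r; omega)
    (fun r _ => by have := hb r; omega)).neg, fun i hip A hA r s hr hs => ?_⟩
  have h := (hf.conj_transpose hb).apply_eq_rightWitness_mul_of_blocks_above
    (p := t + 1 - q) (q := t + 1 - p) (j := t + 1 - i) (c := c) (d := d) (r := s) (s := r)
    (by omega) (by have := hb c; omega) (by have := hb d; omega) (by omega)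
    (hA.transpose (fun _ hr => by omega) (fun _ hr => by omega)) (by omega) (by omega)
  rw [conj_transposeLinearEquiv_apply, transpose_transpose, transpose_apply] at h
  rw [h, mul_neg, Matrix.neg_apply, neg_neg, ← transpose_apply (W * Aᵀ), transpose_mul,
    transpose_transpose]

end IsDerN

end

theorem stmt13_general {F : Type*} [Field F] {n t : ℕ} (b : Fin n → ℕ)
    (hub : ∀ r, b r ≤ t)
    (hsurj : ∀ k, 1 ≤ k → k ≤ t → ∃ r, b r = k)
    (f : Matrix (Fin n) (Fin n) F →ₗ[F] Matrix (Fin n) (Fin n) F)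
    (hf : IsDerN b f)
    (p q : ℕ) (hp : 1 ≤ p) (hpq : p < q) (hq : q ≤ t)
    (h1 : ¬(p = 1 ∧ q = t - 1)) (h2 : ¬(p = 1 ∧ q = t)) (h3 : ¬(p = 2 ∧ q = t)) :
    ∃ Y : Matrix (Fin n) (Fin n) F, InBlk b p q Y ∧
      (∀ i, 1 ≤ i → i < p → ∀ A, InBlk b i p A →
        ∀ r s, b r = i → b s = q → f A r s = -((A * Y) r s)) ∧
      (∀ j, q < j → j ≤ t → ∀ A, InBlk b q j A →
        ∀ r s, b r = p → b s = j → f A r s = (Y * A) r s) := by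
  rcases hq.lt_or_eq with hqt | rfl
  · obtain ⟨c, hc⟩ := hsurj (q + 1) (by omega) hqt
    refine ⟨rightWitness b f p q c, inBlk_rightWitness,
      fun i _ hip A hA r s hr hs => hf.apply_eq_neg_mul_rightWitness hip hpq (by omega) hA hr hs,
      fun j hqj _ A hA r s hr hs => ?_⟩
    by_cases hp1 : p = 1
    · obtain ⟨d, hd⟩ := hsurj (q + 2) (by omega) (by omega)
      exact hf.apply_eq_rightWitness_mul_of_blocks_above hpq hc hd hqj hA hr hs
    · obtain ⟨a, ha⟩ := hsurj 1 le_rfl (by omega)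
      exact hf.apply_eq_rightWitness_mul_of_block_below (a := a) (by omega) hpq (by omega) hqj
        hA hr hs
  · obtain ⟨c, hc⟩ := hsurj (p - 1) (by omega) (by omega)
    obtain ⟨d, hd⟩ := hsurj (p - 2) (by omega) (by omega)
    obtain ⟨Y, hY, hleft⟩ := hf.exists_apply_eq_neg_mul hub hpq le_rfl (c := c) (d := d)
      (by omega) (by omega)
    exact ⟨Y, hY, fun i _ hip => hleft i hip, fun j hqj hjq => absurd hjq (by omega)⟩

/-- for a derivation `f` of `N` and `(p,q)` with `1 ≤ p < q ≤ t` and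
`(p,q) ∉ {(1,t-1), (1,t), (2,t)}`, there is `Y ∈ N^{pq}` with
`f(A)_{iq} = -(A·Y)_{iq}` for `A ∈ N^{ip}`, `i < p`, and
`f(A)_{pj} = (Y·A)_{pj}` for `A ∈ N^{qj}`, `j > q`. -/
theorem stmt13 {F : Type*} [Field F] {n t : ℕ} (b : Fin n → ℕ)
    (hn : 1 ≤ n) (ht : 3 ≤ t) (hmono : Monotone b)
    (hlb : ∀ r, 1 ≤ b r) (hub : ∀ r, b r ≤ t)
    (hsurj : ∀ k, 1 ≤ k → k ≤ t → ∃ r, b r = k)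
    (f : Matrix (Fin n) (Fin n) F →ₗ[F] Matrix (Fin n) (Fin n) F)
    (hf : IsDerN b f)
    (p q : ℕ) (hp : 1 ≤ p) (hpq : p < q) (hq : q ≤ t)
    (h1 : ¬(p = 1 ∧ q = t - 1)) (h2 : ¬(p = 1 ∧ q = t)) (h3 : ¬(p = 2 ∧ q = t)) :
    ∃ Y : Matrix (Fin n) (Fin n) F, InBlk b p q Y ∧
      (∀ i, 1 ≤ i → i < p → ∀ A, InBlk b i p A →
        ∀ r s, b r = i → b s = q → f A r s = -((A * Y) r s)) ∧
      (∀ j, q < j → j ≤ t → ∀ A, InBlk b q j A →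
        ∀ r s, b r = p → b s = j → f A r s = (Y * A) r s) :=
  stmt13_general b hub hsurj f hf p q hp hpq hq h1 h2 h3
end

section
/- Let f : N → N be an F-linear map such that the image of f is contained in N^{1t} (i.e. for every A ∈ N, f(A) r s = 0 unless b r = 1 and b s = t), and f vanishes on every N^{ij} with j > i+1 (equivalently, f(A) = 0 for every A ∈ N whose entries A r s vanish whenever b s = b r + 1). Then f is a derivation of N. -/
/-- any linear map `f : N → N` whose image is contained in the center block
`N^{1t}` and which vanishes on every `N^{ij}` with `j > i + 1` is a derivation of `N`. -/
theorem stmt14 {F : Type*} [Field F] {n t : ℕ} (b : Fin n → ℕ)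
    (hn : 1 ≤ n) (ht : 3 ≤ t) (hmono : Monotone b)
    (hlb : ∀ r, 1 ≤ b r) (hub : ∀ r, b r ≤ t)
    (hsurj : ∀ k, 1 ≤ k → k ≤ t → ∃ r, b r = k)
    (f : Matrix (Fin n) (Fin n) F →ₗ[F] Matrix (Fin n) (Fin n) F)
    (him : ∀ A, InN b A → ∀ r s, ¬(b r = 1 ∧ b s = t) → f A r s = 0)
    (hker : ∀ i j, i + 1 < j → ∀ A, InBlk b i j A → f A = 0) :
    IsDerN b f := by

  have hprodN : ∀ X Y : Matrix (Fin n) (Fin n) F, InN b X → InN b Y →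
      ∀ r s, b s ≤ b r + 1 → (X * Y) r s = 0 := by
    intro X Y hX hY r s hle
    rw [Matrix.mul_apply]
    apply Finset.sum_eq_zero
    intro k _
    by_cases hk : b k ≤ b r
    · rw [hX r k hk, zero_mul]
    · rw [hY k s (by omega), mul_zero]
  constructor
  · intro A hA r s hle
    by_cases h : b r = 1 ∧ b s = t
    · exfalso; omega
    · exact him A hA r s h
  intro X Y hX hY
  have hsub : ∀ r s, b s ≤ b r + 1 → (X * Y - Y * X) r s = 0 := by
    intro r s hle
    have h1 := hprodN X Y hX hY r s hle
    have h2 := hprodN Y X hY hX r s hle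
    simp [Matrix.sub_apply, h1, h2]
  -- LHS is zero
  have hLHS : f (X * Y - Y * X) = 0 := by
    set A := X * Y - Y * X with hAdef
    have hdecomp : A = ∑ p ∈ Finset.range (t+1) ×ˢ Finset.range (t+1),
        Matrix.of (fun r s => if b r = p.1 ∧ b s = p.2 then A r s else 0) := by
      ext r s
      rw [Matrix.sum_apply]
      rw [Finset.sum_eq_single_of_mem (b r, b s)
        (Finset.mem_product.mpr ⟨Finset.mem_range.mpr (Nat.lt_succ_of_le (hub r)),
          Finset.mem_range.mpr (Nat.lt_succ_of_le (hub s))⟩)]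
      · simp
      · intro p hp hne
        simp only [Matrix.of_apply]
        rw [if_neg]
        rintro ⟨h1, h2⟩
        exact hne (Prod.ext h1.symm h2.symm)
    rw [hdecomp, map_sum]
    apply Finset.sum_eq_zero
    intro p hp
    by_cases hcase : p.1 + 1 < p.2
    · apply hker p.1 p.2 hcase
      intro r s h
      simp only [Matrix.of_apply]
      exact if_neg h
    · have : (Matrix.of (fun r s => if b r = p.1 ∧ b s = p.2 then A r s else 0)
          : Matrix (Fin n) (Fin n) F) = 0 := by
        ext r s
        simp only [Matrix.of_apply, Matrix.zero_apply]
        split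
        · next h => exact hsub r s (by omega)
        · rfl
      rw [this, map_zero]
  -- RHS terms are zero
  have hfX := him X hX
  have hfY := him Y hY
  have left0 : ∀ (Z W : Matrix (Fin n) (Fin n) F), InN b W →
      (∀ r s, ¬(b r = 1 ∧ b s = t) → Z r s = 0) → Z * W = 0 := by
    intro Z W hW hZ
    ext r s
    rw [Matrix.mul_apply, Matrix.zero_apply]
    apply Finset.sum_eq_zero
    intro k _
    by_cases hk : b r = 1 ∧ b k = t
    · rw [hW k s (by have := hub s; omega), mul_zero]
    · rw [hZ r k hk, zero_mul]
  have right0 : ∀ (Z W : Matrix (Fin n) (Fin n) F), InN b W →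
      (∀ r s, ¬(b r = 1 ∧ b s = t) → Z r s = 0) → W * Z = 0 := by
    intro Z W hW hZ
    ext r s
    rw [Matrix.mul_apply, Matrix.zero_apply]
    apply Finset.sum_eq_zero
    intro k _
    by_cases hk : b k = 1 ∧ b s = t
    · rw [hW r k (by have := hlb r; omega), zero_mul]
    · rw [hZ k s hk, mul_zero]
  rw [hLHS, left0 (f X) Y hY hfX, right0 (f X) Y hY hfX,
    left0 (f Y) X hX hfY, right0 (f Y) X hX hfY]
  simp
end

section
/- Assume char F = 2 and let f be a derivation of N. (i) If block 1 contains at least two indices (#{r : b r = 1} ≥ 2), then for every A ∈ N^{12}, f(A) r s = 0 whenever (b r, b s) = (3, t), and for every A ∈ N^{13}, f(A) r s = 0 whenever (b r, b s) = (2, t). (ii) If block 1 consists of a single index r₁, then, writing E_u ∈ N^{12} for the matrix with entry 1 in position (r₁, u) and 0 elsewhere (for b u = 2), and E'_v ∈ N^{13} for the matrix with entry 1 in position (r₁, v) and 0 elsewhere (for b v = 3), one has f(E'_v) u s = f(E_u) v s for all indices u with b u = 2, v with b v = 3, and s with b s = t. -/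
/-!
For `p`, `q` in block 1 and `u`, `v` in later blocks with `u ≠ q`, `v ≠ p`, the matrix units
`E_{pu}` and `E_{qv}` commute (both products vanish). Applying the derivation `f` to
`[E_{pu}, E_{qv}] = 0` and reading off the `(ρ, s)` entry with `b ρ = 1` leaves only
`δ_{ρq} f(E_{pu})_{vs} = δ_{ρp} f(E_{qv})_{us}`: the two other terms are entries of `f(E_{pu})`
and `f(E_{qv})` in a column of block 1, which vanish because `f` maps `N` into `N`.
Taking `ρ = q ≠ p` shows `f(E_{pu})_{vs} = 0` whenever block 1 has a second index, which gives
(i) by linearity; taking `ρ = p = q` gives (ii).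
-/

lemma InN.single {F : Type*} [Field F] {n : ℕ} {b : Fin n → ℕ} {p u : Fin n}
    (h : b p < b u) (c : F) : InN b (Matrix.single p u c) := by
  intro r s hrs
  simp only [Matrix.single, Matrix.of_apply, ite_eq_right_iff]
  rintro ⟨rfl, rfl⟩
  omega

lemma LinearMap.apply_matrix_apply {F : Type*} [Field F] {n : ℕ}
    (f : Matrix (Fin n) (Fin n) F →ₗ[F] Matrix (Fin n) (Fin n) F)
    (A : Matrix (Fin n) (Fin n) F) (r s : Fin n) :
    f A r s = ∑ i, ∑ j, A i j * f (Matrix.single i j 1) r s := by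
  conv_lhs => rw [Matrix.matrix_eq_sum_single A]
  simp only [map_sum, Matrix.sum_apply]
  refine Finset.sum_congr rfl fun i _ => Finset.sum_congr rfl fun j _ => ?_
  rw [← smul_eq_mul, ← Matrix.smul_apply, ← map_smul, Matrix.smul_single, smul_eq_mul, mul_one]

lemma LinearMap.apply_apply_eq_zero_of_inBlk {F : Type*} [Field F] {n : ℕ} {b : Fin n → ℕ}
    {i j : ℕ} (f : Matrix (Fin n) (Fin n) F →ₗ[F] Matrix (Fin n) (Fin n) F)
    {A : Matrix (Fin n) (Fin n) F} (hA : InBlk b i j A) {r s : Fin n}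
    (h : ∀ p u, b p = i → b u = j → f (Matrix.single p u 1) r s = 0) : f A r s = 0 := by
  rw [f.apply_matrix_apply]
  refine Finset.sum_eq_zero fun p _ => Finset.sum_eq_zero fun u _ => ?_
  by_cases hpu : b p = i ∧ b u = j
  · rw [h p u hpu.1 hpu.2, mul_zero]
  · rw [hA p u hpu, zero_mul]

namespace IsDerN

variable {F : Type*} [Field F] {n : ℕ} {b : Fin n → ℕ}
  {f : Matrix (Fin n) (Fin n) F →ₗ[F] Matrix (Fin n) (Fin n) F}

lemma add_eq_zero_of_commute (hf : IsDerN b f) {X Y : Matrix (Fin n) (Fin n) F}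
    (hX : InN b X) (hY : InN b Y) (hXY : Commute X Y) :
    (f X * Y - Y * f X) + (X * f Y - f Y * X) = 0 := by
  rw [← hf.2 X Y hX hY, hXY.eq, sub_self, map_zero]

lemma single_mul_apply_eq (hf : IsDerN b f) {p q u v ρ : Fin n}
    (hpu : b p < b u) (hqv : b q < b v) (hqu : q ≠ u) (hpv : p ≠ v)
    (hpρ : b p ≤ b ρ) (hqρ : b q ≤ b ρ) (s : Fin n) :
    (Matrix.single q v (1 : F) * f (Matrix.single p u 1)) ρ s =
      (Matrix.single p u (1 : F) * f (Matrix.single q v 1)) ρ s := by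
  set A := Matrix.single p u (1 : F)
  set B := Matrix.single q v (1 : F)
  have hA : InN b A := .single hpu 1
  have hB : InN b B := .single hqv 1
  have hAB : Commute A B := by
    rw [Commute, SemiconjBy, Matrix.single_mul_single_of_ne _ _ _ _ hqu.symm,
      Matrix.single_mul_single_of_ne _ _ _ _ hpv.symm]
  have hfA_B : (f A * B) ρ s = 0 := by
    by_cases hsv : s = v
    · rw [hsv, Matrix.mul_single_apply_same, hf.1 A hA ρ q hqρ, zero_mul]
    · exact Matrix.mul_single_apply_of_ne _ _ _ _ _ hsv _
  have hfB_A : (f B * A) ρ s = 0 := by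
    by_cases hsu : s = u
    · rw [hsu, Matrix.mul_single_apply_same, hf.1 B hB ρ p hpρ, zero_mul]
    · exact Matrix.mul_single_apply_of_ne _ _ _ _ _ hsu _
  have h := congrFun (congrFun (hf.add_eq_zero_of_commute hA hB hAB) ρ) s
  simp only [Matrix.add_apply, Matrix.sub_apply, Matrix.zero_apply, hfA_B, hfB_A] at h
  linear_combination -h

lemma apply_single_apply_eq_zero (hf : IsDerN b f) {p q u v : Fin n} (hpq : p ≠ q)
    (hpu : b p < b u) (hqv : b q < b v) (hqu : q ≠ u) (hpv : p ≠ v) (hbpq : b p ≤ b q)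
    (s : Fin n) : f (Matrix.single p u 1) v s = 0 := by
  have h := hf.single_mul_apply_eq hpu hqv hqu hpv hbpq le_rfl s
  rwa [Matrix.single_mul_apply_same, one_mul,
    Matrix.single_mul_apply_of_ne _ _ _ _ _ hpq.symm] at h

lemma apply_single_apply_eq_zero_of_one_lt_card (hf : IsDerN b f) {i : ℕ}
    (hcard : 1 < (Finset.univ.filter fun r => b r = i).card) {p u v : Fin n} (hp : b p = i)
    (hu : i < b u) (hv : i < b v) (s : Fin n) : f (Matrix.single p u 1) v s = 0 := by
  obtain ⟨q, hq, hqp⟩ := Finset.exists_mem_ne hcard p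
  rw [Finset.mem_filter] at hq
  exact hf.apply_single_apply_eq_zero hqp.symm (by omega) (by omega) (by rintro rfl; omega)
    (by rintro rfl; omega) (by omega) s

lemma apply_single_apply_comm_s16 (hf : IsDerN b f) {p u v : Fin n} (hpu : b p < b u)
    (hpv : b p < b v) (s : Fin n) :
    f (Matrix.single p u 1) v s = f (Matrix.single p v 1) u s := by
  have h := hf.single_mul_apply_eq hpu hpv (by rintro rfl; omega) (by rintro rfl; omega)
    le_rfl le_rfl s
  rwa [Matrix.single_mul_apply_same, Matrix.single_mul_apply_same, one_mul, one_mul] at h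

end IsDerN

theorem stmt16_general {F : Type*} [Field F] {n t : ℕ} (b : Fin n → ℕ)
    (f : Matrix (Fin n) (Fin n) F →ₗ[F] Matrix (Fin n) (Fin n) F)
    (hf : IsDerN b f) :
    (2 ≤ (Finset.univ.filter fun r => b r = 1).card →
      (∀ A, InBlk b 1 2 A → ∀ r s, b r = 3 → b s = t → f A r s = 0) ∧
      (∀ A, InBlk b 1 3 A → ∀ r s, b r = 2 → b s = t → f A r s = 0)) ∧
    (∀ r₁ : Fin n, b r₁ = 1 → (Finset.univ.filter fun r => b r = 1).card = 1 →
      ∀ u v s, b u = 2 → b v = 3 → b s = t →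
        f (Matrix.single r₁ v (1 : F)) u s
          = f (Matrix.single r₁ u (1 : F)) v s) := by
  refine ⟨fun hcard => ⟨fun A hA r s hr _ => ?_, fun A hA r s hr _ => ?_⟩,
    fun r₁ hr₁ _ u v s hu hv _ => ?_⟩
  · exact f.apply_apply_eq_zero_of_inBlk hA fun p u hp hu =>
      hf.apply_single_apply_eq_zero_of_one_lt_card hcard hp (by omega) (by omega) s
  · exact f.apply_apply_eq_zero_of_inBlk hA fun p u hp hu =>
      hf.apply_single_apply_eq_zero_of_one_lt_card hcard hp (by omega) (by omega) s
  · exact hf.apply_single_apply_comm_s16 (by omega) (by omega) s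

/-- for `char F = 2` and a derivation `f` of `N`: (i) if block 1 has at least
two indices then the `(3,t)` block of `f(N^{12})` and the `(2,t)` block of `f(N^{13})`
vanish; (ii) if block 1 is a single index `r₁` then `f(E'_v) u s = f(E_u) v s` for
`b u = 2`, `b v = 3`, `b s = t`, where `E_u = E^{12}_{r₁ u}` and `E'_v = E^{13}_{r₁ v}`. -/
theorem stmt16 {F : Type*} [Field F] {n t : ℕ} (b : Fin n → ℕ)
    (hn : 1 ≤ n) (ht : 3 ≤ t) (hmono : Monotone b)
    (hlb : ∀ r, 1 ≤ b r) (hub : ∀ r, b r ≤ t)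
    (hsurj : ∀ k, 1 ≤ k → k ≤ t → ∃ r, b r = k)
    (hchar : ringChar F = 2)
    (f : Matrix (Fin n) (Fin n) F →ₗ[F] Matrix (Fin n) (Fin n) F)
    (hf : IsDerN b f) :
    (2 ≤ (Finset.univ.filter fun r => b r = 1).card →
      (∀ A, InBlk b 1 2 A → ∀ r s, b r = 3 → b s = t → f A r s = 0) ∧
      (∀ A, InBlk b 1 3 A → ∀ r s, b r = 2 → b s = t → f A r s = 0)) ∧
    (∀ r₁ : Fin n, b r₁ = 1 → (Finset.univ.filter fun r => b r = 1).card = 1 →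
      ∀ u v s, b u = 2 → b v = 3 → b s = t →
        f (Matrix.single r₁ v (1 : F)) u s
          = f (Matrix.single r₁ u (1 : F)) v s) :=
  stmt16_general b f hf
end
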